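/- For every n ≥ 2 there exists a planar point set of size 2^{n-2} in general position containing no n points in convex position (i.e., ram_g(n) ≥ 2^{n-2}). -/

import Mathlib

/-- The slope of the line through two planar points. -/
noncomputable def ptSlope (p q : ℝ × ℝ) : ℝ := (q.2 - p.2) / (q.1 - p.1)

/-- `f` lists the points of a cup: `x`-coordinates strictly increasing and slopes increasing. -/
def IsCupSeq {m : ℕ} (f : Fin m → ℝ × ℝ) : Prop :=
  StrictMono (fun i => (f i).1) ∧
  ∀ i j k : Fin m, i < j → j < k → ptSlope (f i) (f j) < ptSlope (f j) (f k)

/-- `f` lists the points of a cap: `x`-coordinates strictly increasing and slopes decreasing. -/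
def IsCapSeq {m : ℕ} (f : Fin m → ℝ × ℝ) : Prop :=
  StrictMono (fun i => (f i).1) ∧
  ∀ i j k : Fin m, i < j → j < k → ptSlope (f j) (f k) < ptSlope (f i) (f j)

/-- `P` contains a `k`-cup. -/
def HasCup (P : Finset (ℝ × ℝ)) (k : ℕ) : Prop :=
  ∃ f : Fin k → ℝ × ℝ, (∀ i, f i ∈ P) ∧ IsCupSeq f

/-- `P` contains an `l`-cap. -/
def HasCap (P : Finset (ℝ × ℝ)) (l : ℕ) : Prop :=
  ∃ f : Fin l → ℝ × ℝ, (∀ i, f i ∈ P) ∧ IsCapSeq f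

/-- `P` is in general position: no three distinct points are collinear. -/
def GenPos (P : Finset (ℝ × ℝ)) : Prop :=
  ∀ p ∈ P, ∀ q ∈ P, ∀ r ∈ P, p ≠ q → p ≠ r → q ≠ r →
    ¬ Collinear ℝ ({p, q, r} : Set (ℝ × ℝ))

/-- `P` is generic: in general position and all `x`-coordinates are distinct. -/
def Generic (P : Finset (ℝ × ℝ)) : Prop :=
  GenPos P ∧ Set.InjOn (fun p : ℝ × ℝ => p.1) ↑P

/-- `P` contains no `k`-cup and no `l`-cap. -/
def CupCapFree (P : Finset (ℝ × ℝ)) (k l : ℕ) : Prop := ¬ HasCup P k ∧ ¬ HasCap P l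

/-- `P` is `(k,l)`-cup-cap-saturated. -/
def CupCapSat (P : Finset (ℝ × ℝ)) (k l : ℕ) : Prop :=
  Generic P ∧ CupCapFree P k l ∧
  ∀ q : ℝ × ℝ, q ∉ P → Generic (insert q P) →
    HasCup (insert q P) k ∨ HasCap (insert q P) l
/-- A set of planar points is in convex position: every point is a vertex of the convex hull. -/
def ConvexPos (S : Set (ℝ × ℝ)) : Prop :=
  ∀ p ∈ S, p ∉ convexHull ℝ (S \ {p})

namespace ESAux

open Finset Set

/-- y-coordinate of the line through `p`,`q` at abscissa `x`. -/
noncomputable def lineY (p q : ℝ × ℝ) (x : ℝ) : ℝ := p.2 + ptSlope p q * (x - p.1)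

lemma ptSlope_comm (p q : ℝ × ℝ) : ptSlope p q = ptSlope q p := by
  unfold ptSlope
  rw [show p.2 - q.2 = -(q.2 - p.2) by ring, show p.1 - q.1 = -(q.1 - p.1) by ring,
    neg_div_neg_eq]

lemma cross_pq_qr {p q r : ℝ × ℝ} (h1 : p.1 < q.1) (h2 : q.1 < r.1) :
    ptSlope p q < ptSlope q r ↔ (q.2 - p.2) * (r.1 - q.1) < (r.2 - q.2) * (q.1 - p.1) := by
  rw [ptSlope, ptSlope, div_lt_div_iff₀ (by linarith) (by linarith)]

lemma cross_pq_pr {p q r : ℝ × ℝ} (h1 : p.1 < q.1) (h2 : q.1 < r.1) :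
    ptSlope p q < ptSlope p r ↔ (q.2 - p.2) * (r.1 - p.1) < (r.2 - p.2) * (q.1 - p.1) := by
  rw [ptSlope, ptSlope, div_lt_div_iff₀ (by linarith) (by linarith)]

lemma cross_pr_qr {p q r : ℝ × ℝ} (h1 : p.1 < q.1) (h2 : q.1 < r.1) :
    ptSlope p r < ptSlope q r ↔ (r.2 - p.2) * (r.1 - q.1) < (r.2 - q.2) * (r.1 - p.1) := by
  rw [ptSlope, ptSlope, div_lt_div_iff₀ (by linarith) (by linarith)]

lemma cross_line {p q r : ℝ × ℝ} (h1 : p.1 < q.1) (h2 : q.1 < r.1) :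
    q.2 < lineY p r q.1 ↔ (q.2 - p.2) * (r.1 - p.1) < (r.2 - p.2) * (q.1 - p.1) := by
  have hd : (0:ℝ) < r.1 - p.1 := by linarith
  rw [lineY, ptSlope, div_mul_eq_mul_div, ← sub_lt_iff_lt_add', lt_div_iff₀ hd]

lemma slope_iff_line {p q r : ℝ × ℝ} (h1 : p.1 < q.1) (h2 : q.1 < r.1) :
    ptSlope p q < ptSlope q r ↔ q.2 < lineY p r q.1 := by
  rw [cross_pq_qr h1 h2, cross_line h1 h2]
  constructor <;> intro h <;> nlinarith [h]

lemma slope_iff_line' {p q r : ℝ × ℝ} (h1 : p.1 < q.1) (h2 : q.1 < r.1) :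
    ptSlope q r < ptSlope p q ↔ lineY p r q.1 < q.2 := by
  have hd : (0:ℝ) < r.1 - p.1 := by linarith
  have : lineY p r q.1 < q.2 ↔ (r.2 - p.2) * (q.1 - p.1) < (q.2 - p.2) * (r.1 - p.1) := by
    rw [lineY, ptSlope, div_mul_eq_mul_div, ← lt_sub_iff_add_lt', div_lt_iff₀ hd]
  rw [this, ptSlope, ptSlope, div_lt_div_iff₀ (by linarith) (by linarith)]
  constructor <;> intro h <;> nlinarith [h]

lemma slope_pq_lt_pr {p q r : ℝ × ℝ} (h1 : p.1 < q.1) (h2 : q.1 < r.1)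
    (h : ptSlope p q < ptSlope q r) : ptSlope p q < ptSlope p r := by
  rw [cross_pq_qr h1 h2] at h
  rw [cross_pq_pr h1 h2]
  nlinarith [h]

lemma slope_pr_lt_qr {p q r : ℝ × ℝ} (h1 : p.1 < q.1) (h2 : q.1 < r.1)
    (h : ptSlope p q < ptSlope q r) : ptSlope p r < ptSlope q r := by
  rw [cross_pq_qr h1 h2] at h
  rw [cross_pr_qr h1 h2]
  nlinarith [h]

lemma collinear_triple {p q r : ℝ × ℝ} (hpq : p.1 ≠ q.1) :
    Collinear ℝ ({p, q, r} : Set (ℝ × ℝ)) ↔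
      (r.2 - p.2) * (q.1 - p.1) = (q.2 - p.2) * (r.1 - p.1) := by
  rw [collinear_iff_of_mem (Set.mem_insert p _)]
  constructor
  · rintro ⟨v, hv⟩
    obtain ⟨tq, hq⟩ := hv q (by simp)
    obtain ⟨tr, hr⟩ := hv r (by simp)
    have hq1 : q.1 = tq * v.1 + p.1 := by rw [hq]; rfl
    have hq2 : q.2 = tq * v.2 + p.2 := by rw [hq]; rfl
    have hr1 : r.1 = tr * v.1 + p.1 := by rw [hr]; rfl
    have hr2 : r.2 = tr * v.2 + p.2 := by rw [hr]; rfl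
    rw [hq1, hq2, hr1, hr2]; ring
  · intro hdet
    refine ⟨q - p, ?_⟩
    intro x hx
    have hne : q.1 - p.1 ≠ 0 := sub_ne_zero.mpr (Ne.symm hpq)
    rcases hx with rfl | rfl | hx
    · exact ⟨0, by simp⟩
    · exact ⟨1, by simp⟩
    · rw [Set.mem_singleton_iff] at hx
      subst hx
      refine ⟨(x.1 - p.1) / (q.1 - p.1), ?_⟩
      have e1 : (x.1 - p.1) / (q.1 - p.1) * (q.1 - p.1) = x.1 - p.1 := by
        field_simp
      have e2 : (x.1 - p.1) / (q.1 - p.1) * (q.2 - p.2) = x.2 - p.2 := by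
        rw [div_mul_eq_mul_div, div_eq_iff hne]
        nlinarith [hdet]
      have : ((x.1 - p.1) / (q.1 - p.1)) • (q - p) +ᵥ p
          = (((x.1 - p.1) / (q.1 - p.1)) * (q.1 - p.1) + p.1,
             ((x.1 - p.1) / (q.1 - p.1)) * (q.2 - p.2) + p.2) := rfl
      rw [this, e1, e2]
      ext <;> simp

lemma not_collinear_of_slope_ne {p q r : ℝ × ℝ} (h1 : p.1 < q.1) (h2 : p.1 < r.1)
    (hne : ptSlope p q ≠ ptSlope p r) : ¬ Collinear ℝ ({p, q, r} : Set (ℝ × ℝ)) := by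
  rw [collinear_triple (ne_of_lt h1)]
  intro hdet
  apply hne
  rw [ptSlope, ptSlope, div_eq_div_iff (by linarith) (by linarith)]
  nlinarith [hdet]

lemma collinear_slope_eq {p q r : ℝ × ℝ} (h1 : p.1 < q.1) (h2 : p.1 < r.1)
    (hc : Collinear ℝ ({p, q, r} : Set (ℝ × ℝ))) : ptSlope p q = ptSlope p r := by
  by_contra hne
  exact not_collinear_of_slope_ne h1 h2 hne hc

end ESAux
namespace ESAux

lemma cupSeq_comp {m m' : ℕ} {f : Fin m' → ℝ × ℝ} (hf : IsCupSeq f)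
    (e : Fin m → Fin m') (he : StrictMono e) : IsCupSeq (f ∘ e) :=
  ⟨fun i j hij => hf.1 (he hij), fun i j k hij hjk => hf.2 _ _ _ (he hij) (he hjk)⟩

lemma capSeq_comp {m m' : ℕ} {f : Fin m' → ℝ × ℝ} (hf : IsCapSeq f)
    (e : Fin m → Fin m') (he : StrictMono e) : IsCapSeq (f ∘ e) :=
  ⟨fun i j hij => hf.1 (he hij), fun i j k hij hjk => hf.2 _ _ _ (he hij) (he hjk)⟩

lemma hasCup_mono {P : Finset (ℝ × ℝ)} {j k : ℕ} (h : j ≤ k) (hk : HasCup P k) :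
    HasCup P j := by
  obtain ⟨f, hfP, hf⟩ := hk
  exact ⟨f ∘ Fin.castLE h, fun i => hfP _, cupSeq_comp hf _ (fun _ _ hij => hij)⟩

lemma hasCap_mono {P : Finset (ℝ × ℝ)} {j k : ℕ} (h : j ≤ k) (hk : HasCap P k) :
    HasCap P j := by
  obtain ⟨f, hfP, hf⟩ := hk
  exact ⟨f ∘ Fin.castLE h, fun i => hfP _, capSeq_comp hf _ (fun _ _ hij => hij)⟩

lemma hasCup_subset {P Q : Finset (ℝ × ℝ)} (h : P ⊆ Q) {k : ℕ} (hk : HasCup P k) :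
    HasCup Q k := by
  obtain ⟨f, hfP, hf⟩ := hk
  exact ⟨f, fun i => h (hfP i), hf⟩

lemma hasCap_subset {P Q : Finset (ℝ × ℝ)} (h : P ⊆ Q) {k : ℕ} (hk : HasCap P k) :
    HasCap Q k := by
  obtain ⟨f, hfP, hf⟩ := hk
  exact ⟨f, fun i => h (hfP i), hf⟩

lemma generic_subset {P Q : Finset (ℝ × ℝ)} (h : P ⊆ Q) (hQ : Generic Q) : Generic P := by
  refine ⟨fun p hp q hq r hr => hQ.1 p (h hp) q (h hq) r (h hr), ?_⟩
  exact hQ.2.mono (by exact_mod_cast h)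

lemma convexPos_subset {S T : Set (ℝ × ℝ)} (h : S ⊆ T) (hT : ConvexPos T) : ConvexPos S := by
  intro p hp hmem
  exact hT p (h hp) (convexHull_mono (Set.diff_subset_diff_left h) hmem)

/-- A cup sequence is injective. -/
lemma cupSeq_inj {m : ℕ} {f : Fin m → ℝ × ℝ} (hf : IsCupSeq f) :
    Function.Injective f := by
  intro i j hij
  by_contra hne
  rcases lt_or_gt_of_ne hne with h | h
  · exact absurd (congrArg Prod.fst hij) (ne_of_lt (hf.1 h))
  · exact absurd (congrArg Prod.fst hij) (ne_of_gt (hf.1 h))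

lemma capSeq_inj {m : ℕ} {f : Fin m → ℝ × ℝ} (hf : IsCapSeq f) :
    Function.Injective f := by
  intro i j hij
  by_contra hne
  rcases lt_or_gt_of_ne hne with h | h
  · exact absurd (congrArg Prod.fst hij) (ne_of_lt (hf.1 h))
  · exact absurd (congrArg Prod.fst hij) (ne_of_gt (hf.1 h))

/-- A finset with at most one element has no 2-cup / 2-cap. -/
lemma not_hasCup_two {P : Finset (ℝ × ℝ)} (h : P.card ≤ 1) : ¬ HasCup P 2 := by
  rintro ⟨f, hfP, hf⟩
  have h01 : f 0 ≠ f 1 := fun e => absurd (congrArg Prod.fst e)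
    (ne_of_lt (hf.1 (show (0 : Fin 2) < 1 by decide)))
  have := Finset.card_le_one.mp h (f 0) (hfP 0) (f 1) (hfP 1)
  exact h01 this

lemma not_hasCap_two {P : Finset (ℝ × ℝ)} (h : P.card ≤ 1) : ¬ HasCap P 2 := by
  rintro ⟨f, hfP, hf⟩
  have h01 : f 0 ≠ f 1 := fun e => absurd (congrArg Prod.fst e)
    (ne_of_lt (hf.1 (show (0 : Fin 2) < 1 by decide)))
  have := Finset.card_le_one.mp h (f 0) (hfP 0) (f 1) (hfP 1)
  exact h01 this

/-- A singleton is generic. -/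
lemma generic_singleton (p : ℝ × ℝ) : Generic {p} := by
  constructor
  · intro a ha b hb c hc hab _ _
    simp only [Finset.mem_singleton] at ha hb
    exact absurd (ha.trans hb.symm) hab
  · intro a ha b hb _
    simp only [Finset.coe_singleton, Set.mem_singleton_iff] at ha hb
    rw [ha, hb]

end ESAux
namespace ESAux

open Set

lemma chord_mem_segment {p s : ℝ × ℝ} (h : p.1 < s.1) {x : ℝ} (hx1 : p.1 ≤ x)
    (hx2 : x ≤ s.1) : ((x, lineY p s x) : ℝ × ℝ) ∈ segment ℝ p s := by
  have hd : (0:ℝ) < s.1 - p.1 := by linarith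
  set t : ℝ := (x - p.1) / (s.1 - p.1) with ht
  have ht0 : 0 ≤ t := div_nonneg (by linarith) (le_of_lt hd)
  have ht1 : t ≤ 1 := by
    rw [ht, div_le_one hd]; linarith
  show ∃ a b : ℝ, 0 ≤ a ∧ 0 ≤ b ∧ a + b = 1 ∧ a • p + b • s = ((x, lineY p s x) : ℝ × ℝ)
  refine ⟨1 - t, t, by linarith, ht0, by ring, ?_⟩
  have hx : (1 - t) * p.1 + t * s.1 = x := by
    have : t * (s.1 - p.1) = x - p.1 := by
      rw [ht, div_mul_cancel₀]; exact ne_of_gt hd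
    nlinarith [this]
  have hy : (1 - t) * p.2 + t * s.2 = lineY p s x := by
    have ht' : t * (s.2 - p.2) = ptSlope p s * (x - p.1) := by
      rw [ht, ptSlope, div_mul_eq_mul_div, div_mul_eq_mul_div]
      ring
    rw [lineY]
    nlinarith [ht']
  show ((1 - t) * p.1 + t * s.1, (1 - t) * p.2 + t * s.2) = (x, lineY p s x)
  rw [hx, hy]

lemma mem_hull_vert {q u v : ℝ × ℝ} {X : Set (ℝ × ℝ)} (hu : u ∈ convexHull ℝ X)
    (hv : v ∈ convexHull ℝ X) (hx1 : u.1 = q.1) (hx2 : v.1 = q.1)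
    (h1 : u.2 ≤ q.2) (h2 : q.2 ≤ v.2) : q ∈ convexHull ℝ X := by
  have hseg : segment ℝ u v ⊆ convexHull ℝ X :=
    (convex_convexHull ℝ X).segment_subset hu hv
  apply hseg
  rcases eq_or_lt_of_le (h1.trans h2) with he | hlt
  · have : q = u := by
      have : u.2 = q.2 := le_antisymm h1 (by linarith)
      ext
      · exact hx1.symm
      · exact this.symm
    rw [this]; exact left_mem_segment ℝ u v
  · set t : ℝ := (q.2 - u.2) / (v.2 - u.2) with ht
    have hd : (0:ℝ) < v.2 - u.2 := by linarith
    have ht0 : 0 ≤ t := div_nonneg (by linarith) (le_of_lt hd)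
    have ht1 : t ≤ 1 := by rw [ht, div_le_one hd]; linarith
    show ∃ a b : ℝ, 0 ≤ a ∧ 0 ≤ b ∧ a + b = 1 ∧ a • u + b • v = q
    refine ⟨1 - t, t, by linarith, ht0, by ring, ?_⟩
    have hty : t * (v.2 - u.2) = q.2 - u.2 := by
      rw [ht, div_mul_cancel₀]; exact ne_of_gt hd
    show ((1 - t) * u.1 + t * v.1, (1 - t) * u.2 + t * v.2) = q
    have e1 : (1 - t) * u.1 + t * v.1 = q.1 := by rw [hx1, hx2]; ring
    have e2 : (1 - t) * u.2 + t * v.2 = q.2 := by nlinarith [hty]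
    rw [e1, e2]

lemma enum_by_x (C : Finset (ℝ × ℝ)) (hinj : Set.InjOn (fun p : ℝ × ℝ => p.1) ↑C) :
    ∃ f : Fin C.card → ℝ × ℝ, (∀ i, f i ∈ C) ∧ StrictMono (fun i => (f i).1) ∧
      ∀ p ∈ C, ∃ i, f i = p := by
  classical
  set D := C.image (fun p => p.1) with hD
  have hcard : D.card = C.card := Finset.card_image_of_injOn hinj
  set e := D.orderIsoOfFin hcard with he
  have hex : ∀ i : Fin C.card, ∃! p, p ∈ C ∧ p.1 = (e i : ℝ) := by
    intro i
    have hmem : (e i : ℝ) ∈ D := (e i).2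
    obtain ⟨p, hp, hpe⟩ := Finset.mem_image.mp hmem
    refine ⟨p, ⟨hp, hpe⟩, ?_⟩
    rintro q ⟨hq, hqe⟩
    exact hinj (by exact_mod_cast hq) (by exact_mod_cast hp) (by simp [hpe, hqe])
  set f : Fin C.card → ℝ × ℝ := fun i => Finset.choose _ C (hex i) with hf
  have hfC : ∀ i, f i ∈ C := fun i => Finset.choose_mem _ C (hex i)
  have hfx : ∀ i, (f i).1 = (e i : ℝ) := fun i => Finset.choose_property _ C (hex i)
  refine ⟨f, hfC, ?_, ?_⟩
  · intro i j hij
    have := e.strictMono hij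
    simp only [hfx]
    exact_mod_cast this
  · intro p hp
    have hpD : p.1 ∈ D := Finset.mem_image_of_mem _ hp
    obtain ⟨i, hi⟩ := e.surjective ⟨p.1, hpD⟩
    refine ⟨i, ?_⟩
    apply hinj (by exact_mod_cast hfC i) (by exact_mod_cast hp)
    show (f i).1 = p.1
    rw [hfx i, hi]

end ESAux
namespace ESAux

open Set

lemma pair_subset_diff {x y q : ℝ × ℝ} {S : Finset (ℝ × ℝ)} (hx : x ∈ S) (hy : y ∈ S)
    (hxq : x ≠ q) (hyq : y ≠ q) :
    ({x, y} : Set (ℝ × ℝ)) ⊆ (↑S : Set (ℝ × ℝ)) \ {q} := by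
  intro z hz
  simp only [Set.mem_diff, Set.mem_singleton_iff]
  rcases hz with rfl | hz
  · exact ⟨by exact_mod_cast hx, hxq⟩
  · rw [Set.mem_singleton_iff] at hz
    subst hz
    exact ⟨by exact_mod_cast hy, hyq⟩

lemma collinear_of_on_line {p q s : ℝ × ℝ} (h1 : p.1 < q.1) (h2 : q.1 < s.1)
    (h : q.2 = lineY p s q.1) : Collinear ℝ ({p, q, s} : Set (ℝ × ℝ)) := by
  rw [collinear_triple (ne_of_lt h1)]
  have hd : s.1 - p.1 ≠ 0 := ne_of_gt (by linarith)
  rw [lineY] at h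
  have h' : ptSlope p s * (q.1 - p.1) = q.2 - p.2 := by linarith [h]
  rw [ptSlope, div_mul_eq_mul_div, div_eq_iff hd] at h'
  linarith [h']

lemma decomposition (S : Finset (ℝ × ℝ)) (hS2 : 2 ≤ S.card)
    (hinj : Set.InjOn (fun p : ℝ × ℝ => p.1) ↑S) (hgp : GenPos S)
    (hconv : ConvexPos ↑S) :
    ∃ (a b : ℕ) (f : Fin (a + 2) → ℝ × ℝ) (g : Fin (b + 2) → ℝ × ℝ),
      a + b + 2 = S.card ∧
      (∀ i, f i ∈ S) ∧ (∀ i, g i ∈ S) ∧ IsCupSeq f ∧ IsCapSeq g ∧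
      (∀ p ∈ S, (f 0).1 ≤ p.1 ∧ p.1 ≤ (f (Fin.last (a + 1))).1) ∧
      (∀ p ∈ S, (g 0).1 ≤ p.1 ∧ p.1 ≤ (g (Fin.last (b + 1))).1) := by
  classical
  have hne : S.Nonempty := Finset.card_pos.mp (by omega)
  obtain ⟨l, hl, hlmin⟩ := S.exists_min_image (fun p => p.1) hne
  obtain ⟨r, hr, hrmax⟩ := S.exists_max_image (fun p => p.1) hne
  obtain ⟨p₀, hp₀, q₀, hq₀, hpq₀⟩ := Finset.one_lt_card.mp (show 1 < S.card by omega)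
  have hlr : l.1 < r.1 := by
    rcases lt_or_ge l.1 r.1 with h | h
    · exact h
    · exfalso
      have e1 : p₀.1 = q₀.1 := by
        have := hlmin p₀ hp₀; have := hrmax p₀ hp₀
        have := hlmin q₀ hq₀; have := hrmax q₀ hq₀
        linarith
      exact hpq₀ (hinj (by exact_mod_cast hp₀) (by exact_mod_cast hq₀) e1)
  have hlrne : l ≠ r := fun h => absurd (congrArg Prod.fst h) (ne_of_lt hlr)
  have hLl : lineY l r l.1 = l.2 := by simp [lineY]
  have hLr : lineY l r r.1 = r.2 := by
    rw [lineY, ptSlope, div_mul_cancel₀ _ (ne_of_gt (by linarith : (0:ℝ) < r.1 - l.1))]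
    ring
  -- x-distinctness helpers
  have hxne : ∀ p ∈ S, ∀ q ∈ S, p ≠ q → p.1 ≠ q.1 := by
    intro p hp q hq hne' he
    exact hne' (hinj (by exact_mod_cast hp) (by exact_mod_cast hq) he)
  have hsep : ∀ p ∈ S, p ≠ l → p ≠ r → p.2 ≠ lineY l r p.1 := by
    intro p hp hpl hpr heq
    have hx1 : l.1 < p.1 := lt_of_le_of_ne (hlmin p hp) (Ne.symm (hxne p hp l hl hpl))
    have hx2 : p.1 < r.1 := lt_of_le_of_ne (hrmax p hp) (hxne p hp r hr hpr)
    have hcol : Collinear ℝ ({l, p, r} : Set (ℝ × ℝ)) := collinear_of_on_line hx1 hx2 heq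
    exact hgp l hl p hp r hr (Ne.symm hpl) hlrne hpr hcol
  set U : Finset (ℝ × ℝ) := S.filter (fun p => lineY l r p.1 < p.2) with hU
  set D : Finset (ℝ × ℝ) := S.filter (fun p => p.2 < lineY l r p.1) with hD
  have hlU : l ∉ U := by simp [hU, hLl]
  have hrU : r ∉ U := by simp [hU, hLr]
  have hlD : l ∉ D := by simp [hD, hLl]
  have hrD : r ∉ D := by simp [hD, hLr]
  have hUD : Disjoint U D := by
    rw [Finset.disjoint_left]
    intro p hpU hpD
    have h1 := (Finset.mem_filter.mp hpU).2
    have h2 := (Finset.mem_filter.mp hpD).2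
    linarith
  have hpart : S = insert l (insert r (U ∪ D)) := by
    ext p
    constructor
    · intro hp
      by_cases h1 : p = l
      · simp [h1]
      by_cases h2 : p = r
      · simp [h2]
      rcases lt_or_gt_of_ne (hsep p hp h1 h2) with h | h
      · simp only [Finset.mem_insert, Finset.mem_union]
        right; right; right
        exact Finset.mem_filter.mpr ⟨hp, h⟩
      · simp only [Finset.mem_insert, Finset.mem_union]
        right; right; left
        exact Finset.mem_filter.mpr ⟨hp, h⟩
    · intro hp
      rcases Finset.mem_insert.mp hp with rfl | hp
      · exact hl
      rcases Finset.mem_insert.mp hp with rfl | hp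
      · exact hr
      rcases Finset.mem_union.mp hp with hp | hp
      · exact (Finset.mem_filter.mp hp).1
      · exact (Finset.mem_filter.mp hp).1
  have hrUD : r ∉ U ∪ D := by
    simp only [Finset.mem_union]; push_neg; exact ⟨hrU, hrD⟩
  have hlUD : l ∉ insert r (U ∪ D) := by
    simp only [Finset.mem_insert, Finset.mem_union]; push_neg; exact ⟨hlrne, hlU, hlD⟩
  have hcardS : S.card = U.card + D.card + 2 := by
    rw [hpart, Finset.card_insert_of_notMem hlUD, Finset.card_insert_of_notMem hrUD,
      Finset.card_union_of_disjoint hUD]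
  -- the cap chain C and cup chain E
  set C : Finset (ℝ × ℝ) := insert l (insert r U) with hCdef
  set E : Finset (ℝ × ℝ) := insert l (insert r D) with hEdef
  have hCsub : C ⊆ S := by
    intro p hp
    rcases Finset.mem_insert.mp hp with rfl | hp
    · exact hl
    rcases Finset.mem_insert.mp hp with rfl | hp
    · exact hr
    · exact (Finset.mem_filter.mp hp).1
  have hEsub : E ⊆ S := by
    intro p hp
    rcases Finset.mem_insert.mp hp with rfl | hp
    · exact hl
    rcases Finset.mem_insert.mp hp with rfl | hp
    · exact hr
    · exact (Finset.mem_filter.mp hp).1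
  have hlrU : l ∉ insert r U := by
    simp only [Finset.mem_insert]; push_neg; exact ⟨hlrne, hlU⟩
  have hCcard : C.card = U.card + 2 := by
    rw [hCdef, Finset.card_insert_of_notMem hlrU, Finset.card_insert_of_notMem hrU]
  have hlrD : l ∉ insert r D := by
    simp only [Finset.mem_insert]; push_neg; exact ⟨hlrne, hlD⟩
  have hEcard : E.card = D.card + 2 := by
    rw [hEdef, Finset.card_insert_of_notMem hlrD, Finset.card_insert_of_notMem hrD]
  have hCabove : ∀ p ∈ C, lineY l r p.1 ≤ p.2 := by
    intro p hp
    rcases Finset.mem_insert.mp hp with rfl | hp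
    · rw [hLl]
    rcases Finset.mem_insert.mp hp with rfl | hp
    · rw [hLr]
    · exact le_of_lt (Finset.mem_filter.mp hp).2
  have hEbelow : ∀ p ∈ E, p.2 ≤ lineY l r p.1 := by
    intro p hp
    rcases Finset.mem_insert.mp hp with rfl | hp
    · rw [hLl]
    rcases Finset.mem_insert.mp hp with rfl | hp
    · rw [hLr]
    · exact le_of_lt (Finset.mem_filter.mp hp).2
  have hlC : l ∈ C := Finset.mem_insert_self _ _
  have hrC : r ∈ C := Finset.mem_insert.mpr (Or.inr (Finset.mem_insert_self _ _))
  have hlE : l ∈ E := Finset.mem_insert_self _ _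
  have hrE : r ∈ E := Finset.mem_insert.mpr (Or.inr (Finset.mem_insert_self _ _))
  -- the two triple properties
  have hcap3 : ∀ p ∈ C, ∀ q ∈ C, ∀ s ∈ C, p.1 < q.1 → q.1 < s.1 →
      ptSlope q s < ptSlope p q := by
    intro p hp q hq s hs hpq hqs
    by_contra hcon
    push_neg at hcon
    have hpS := hCsub hp; have hqS := hCsub hq; have hsS := hCsub hs
    have hql : q ≠ l := by
      intro h; rw [h] at hpq; exact absurd (hlmin p hpS) (not_le.mpr hpq)
    have hqr : q ≠ r := by
      intro h; rw [h] at hqs; exact absurd (hrmax s hsS) (not_le.mpr hqs)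
    have hqU : lineY l r q.1 < q.2 := by
      rcases Finset.mem_insert.mp hq with h | h
      · exact absurd h hql
      rcases Finset.mem_insert.mp h with h | h
      · exact absurd h hqr
      · exact (Finset.mem_filter.mp h).2
    have hble : q.2 ≤ lineY p s q.1 := by
      by_contra hgt
      push_neg at hgt
      exact absurd ((slope_iff_line' hpq hqs).mpr hgt) (not_lt.mpr hcon)
    have hpqne : p ≠ q := fun h => absurd (congrArg Prod.fst h) (ne_of_lt hpq)
    have hqsne : q ≠ s := fun h => absurd (congrArg Prod.fst h) (ne_of_lt hqs)
    have hpsne : p ≠ s := fun h => absurd (congrArg Prod.fst h) (ne_of_lt (hpq.trans hqs))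
    rcases eq_or_lt_of_le hble with heq | hlt
    · exact hgp p hpS q hqS s hsS hpqne hpsne hqsne (collinear_of_on_line hpq hqs heq)
    · have hu : ((q.1, lineY l r q.1) : ℝ × ℝ) ∈ convexHull ℝ ((↑S : Set (ℝ × ℝ)) \ {q}) := by
        have h1 := chord_mem_segment hlr (hlmin q hqS) (hrmax q hqS)
        have h2 : segment ℝ l r ⊆ convexHull ℝ ((↑S : Set (ℝ × ℝ)) \ {q}) := by
          rw [← convexHull_pair]
          exact convexHull_mono (pair_subset_diff hl hr (Ne.symm hql) (Ne.symm hqr))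
        exact h2 h1
      have hv : ((q.1, lineY p s q.1) : ℝ × ℝ) ∈ convexHull ℝ ((↑S : Set (ℝ × ℝ)) \ {q}) := by
        have h1 := chord_mem_segment (hpq.trans hqs) (le_of_lt hpq) (le_of_lt hqs)
        have h2 : segment ℝ p s ⊆ convexHull ℝ ((↑S : Set (ℝ × ℝ)) \ {q}) := by
          rw [← convexHull_pair]
          exact convexHull_mono (pair_subset_diff hpS hsS hpqne (Ne.symm hqsne))
        exact h2 h1
      have hmem := mem_hull_vert (q := q) hu hv rfl rfl (le_of_lt hqU) (le_of_lt hlt)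
      exact hconv q (by exact_mod_cast hqS) hmem
  have hcup3 : ∀ p ∈ E, ∀ q ∈ E, ∀ s ∈ E, p.1 < q.1 → q.1 < s.1 →
      ptSlope p q < ptSlope q s := by
    intro p hp q hq s hs hpq hqs
    by_contra hcon
    push_neg at hcon
    have hpS := hEsub hp; have hqS := hEsub hq; have hsS := hEsub hs
    have hql : q ≠ l := by
      intro h; rw [h] at hpq; exact absurd (hlmin p hpS) (not_le.mpr hpq)
    have hqr : q ≠ r := by
      intro h; rw [h] at hqs; exact absurd (hrmax s hsS) (not_le.mpr hqs)
    have hqD : q.2 < lineY l r q.1 := by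
      rcases Finset.mem_insert.mp hq with h | h
      · exact absurd h hql
      rcases Finset.mem_insert.mp h with h | h
      · exact absurd h hqr
      · exact (Finset.mem_filter.mp h).2
    have hble : lineY p s q.1 ≤ q.2 := by
      by_contra hgt
      push_neg at hgt
      exact absurd ((slope_iff_line hpq hqs).mpr hgt) (not_lt.mpr hcon)
    have hpqne : p ≠ q := fun h => absurd (congrArg Prod.fst h) (ne_of_lt hpq)
    have hqsne : q ≠ s := fun h => absurd (congrArg Prod.fst h) (ne_of_lt hqs)
    have hpsne : p ≠ s := fun h => absurd (congrArg Prod.fst h) (ne_of_lt (hpq.trans hqs))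
    rcases eq_or_lt_of_le hble with heq | hlt
    · exact hgp p hpS q hqS s hsS hpqne hpsne hqsne (collinear_of_on_line hpq hqs heq.symm)
    · have hv : ((q.1, lineY l r q.1) : ℝ × ℝ) ∈ convexHull ℝ ((↑S : Set (ℝ × ℝ)) \ {q}) := by
        have h1 := chord_mem_segment hlr (hlmin q hqS) (hrmax q hqS)
        have h2 : segment ℝ l r ⊆ convexHull ℝ ((↑S : Set (ℝ × ℝ)) \ {q}) := by
          rw [← convexHull_pair]
          exact convexHull_mono (pair_subset_diff hl hr (Ne.symm hql) (Ne.symm hqr))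
        exact h2 h1
      have hu : ((q.1, lineY p s q.1) : ℝ × ℝ) ∈ convexHull ℝ ((↑S : Set (ℝ × ℝ)) \ {q}) := by
        have h1 := chord_mem_segment (hpq.trans hqs) (le_of_lt hpq) (le_of_lt hqs)
        have h2 : segment ℝ p s ⊆ convexHull ℝ ((↑S : Set (ℝ × ℝ)) \ {q}) := by
          rw [← convexHull_pair]
          exact convexHull_mono (pair_subset_diff hpS hsS hpqne (Ne.symm hqsne))
        exact h2 h1
      have hmem := mem_hull_vert (q := q) hu hv rfl rfl (le_of_lt hlt) (le_of_lt hqD)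
      exact hconv q (by exact_mod_cast hqS) hmem
  -- enumerate E (cup) and C (cap)
  obtain ⟨f0, hf0E, hf0mono, hf0surj⟩ := enum_by_x E (hinj.mono (by exact_mod_cast hEsub))
  obtain ⟨g0, hg0C, hg0mono, hg0surj⟩ := enum_by_x C (hinj.mono (by exact_mod_cast hCsub))
  set f : Fin (D.card + 2) → ℝ × ℝ := f0 ∘ Fin.cast hEcard.symm with hfdef
  set g : Fin (U.card + 2) → ℝ × ℝ := g0 ∘ Fin.cast hCcard.symm with hgdef
  have hcast1 : StrictMono (Fin.cast hEcard.symm) := fun i j hij => by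
    rw [Fin.lt_def] at hij ⊢; exact hij
  have hcast2 : StrictMono (Fin.cast hCcard.symm) := fun i j hij => by
    rw [Fin.lt_def] at hij ⊢; exact hij
  have hfE : ∀ i, f i ∈ E := fun i => hf0E _
  have hgC : ∀ i, g i ∈ C := fun i => hg0C _
  have hfmono : StrictMono (fun i => (f i).1) := fun i j hij => hf0mono (hcast1 hij)
  have hgmono : StrictMono (fun i => (g i).1) := fun i j hij => hg0mono (hcast2 hij)
  have hfsurj : ∀ p ∈ E, ∃ i, f i = p := by
    intro p hp
    obtain ⟨i0, hi0⟩ := hf0surj p hp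
    refine ⟨Fin.cast hEcard i0, ?_⟩
    show f0 (Fin.cast hEcard.symm (Fin.cast hEcard i0)) = p
    rwa [show Fin.cast hEcard.symm (Fin.cast hEcard i0) = i0 from Fin.ext rfl]
  have hgsurj : ∀ p ∈ C, ∃ i, g i = p := by
    intro p hp
    obtain ⟨i0, hi0⟩ := hg0surj p hp
    refine ⟨Fin.cast hCcard i0, ?_⟩
    show g0 (Fin.cast hCcard.symm (Fin.cast hCcard i0)) = p
    rwa [show Fin.cast hCcard.symm (Fin.cast hCcard i0) = i0 from Fin.ext rfl]
  refine ⟨D.card, U.card, f, g, by omega, fun i => hEsub (hfE i), fun i => hCsub (hgC i),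
    ⟨hfmono, ?_⟩, ⟨hgmono, ?_⟩, ?_, ?_⟩
  · intro i j k hij hjk
    exact hcup3 _ (hfE i) _ (hfE j) _ (hfE k) (hfmono hij) (hfmono hjk)
  · intro i j k hij hjk
    exact hcap3 _ (hgC i) _ (hgC j) _ (hgC k) (hgmono hij) (hgmono hjk)
  · intro p hp
    obtain ⟨il, hil⟩ := hfsurj l hlE
    obtain ⟨ir, hir⟩ := hfsurj r hrE
    constructor
    · calc (f 0).1 ≤ (f il).1 := hfmono.monotone (Fin.zero_le il)
        _ = l.1 := by rw [hil]
        _ ≤ p.1 := hlmin p hp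
    · calc p.1 ≤ r.1 := hrmax p hp
        _ = (f ir).1 := by rw [hir]
        _ ≤ (f (Fin.last (D.card + 1))).1 := hfmono.monotone (Fin.le_last ir)
  · intro p hp
    obtain ⟨il, hil⟩ := hgsurj l hlC
    obtain ⟨ir, hir⟩ := hgsurj r hrC
    constructor
    · calc (g 0).1 ≤ (g il).1 := hgmono.monotone (Fin.zero_le il)
        _ = l.1 := by rw [hil]
        _ ≤ p.1 := hlmin p hp
    · calc p.1 ≤ r.1 := hrmax p hp
        _ = (g ir).1 := by rw [hir]
        _ ≤ (g (Fin.last (U.card + 1))).1 := hgmono.monotone (Fin.le_last ir)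

end ESAux
namespace ESAux

open Set

/-- scaling + translation affine map -/
noncomputable def tmap (α δ β ε : ℝ) : (ℝ × ℝ) →ᵃ[ℝ] (ℝ × ℝ) where
  toFun v := (α * v.1 + β, δ * v.2 + ε)
  linear := LinearMap.prodMap (α • LinearMap.id) (δ • LinearMap.id)
  map_vadd' p v := by
    show ((α * (v.1 + p.1) + β, δ * (v.2 + p.2) + ε) : ℝ × ℝ)
      = (α * v.1 + (α * p.1 + β), δ * v.2 + (δ * p.2 + ε))
    exact Prod.ext_iff.mpr ⟨show α * (v.1 + p.1) + β = α * v.1 + (α * p.1 + β) by ring,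
      show δ * (v.2 + p.2) + ε = δ * v.2 + (δ * p.2 + ε) by ring⟩

lemma tmap_apply (α δ β ε : ℝ) (v : ℝ × ℝ) :
    tmap α δ β ε v = (α * v.1 + β, δ * v.2 + ε) := rfl

lemma tmap_injective {α δ : ℝ} (hα : α ≠ 0) (hδ : δ ≠ 0) (β ε : ℝ) :
    Function.Injective (tmap α δ β ε) := by
  intro p q h
  rw [tmap_apply, tmap_apply, Prod.ext_iff] at h
  obtain ⟨h1, h2⟩ := h
  dsimp at h1 h2
  ext
  · have : α * p.1 = α * q.1 := by linarith
    exact mul_left_cancel₀ hα this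
  · have : δ * p.2 = δ * q.2 := by linarith
    exact mul_left_cancel₀ hδ this

lemma tmap_slope {α δ : ℝ} (hα : α ≠ 0) (β ε : ℝ) (p q : ℝ × ℝ) :
    ptSlope (tmap α δ β ε p) (tmap α δ β ε q) = (δ / α) * ptSlope p q := by
  rw [tmap_apply, tmap_apply, ptSlope, ptSlope]
  have e1 : δ * q.2 + ε - (δ * p.2 + ε) = δ * (q.2 - p.2) := by ring
  have e2 : α * q.1 + β - (α * p.1 + β) = α * (q.1 - p.1) := by ring
  rw [show ((α * q.1 + β, δ * q.2 + ε) : ℝ × ℝ).2 - ((α * p.1 + β, δ * p.2 + ε) : ℝ × ℝ).2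
      = δ * (q.2 - p.2) by dsimp; ring,
    show ((α * q.1 + β, δ * q.2 + ε) : ℝ × ℝ).1 - ((α * p.1 + β, δ * p.2 + ε) : ℝ × ℝ).1
      = α * (q.1 - p.1) by dsimp; ring]
  exact mul_div_mul_comm δ _ α _

lemma tmap_det {α δ β ε : ℝ} (p q r : ℝ × ℝ) :
    ((tmap α δ β ε r).2 - (tmap α δ β ε p).2) * ((tmap α δ β ε q).1 - (tmap α δ β ε p).1)
      - ((tmap α δ β ε q).2 - (tmap α δ β ε p).2) * ((tmap α δ β ε r).1 - (tmap α δ β ε p).1)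
    = α * δ * ((r.2 - p.2) * (q.1 - p.1) - (q.2 - p.2) * (r.1 - p.1)) := by
  simp only [tmap_apply]
  ring

set_option maxHeartbeats 1000000 in
lemma normalize (Q : Finset (ℝ × ℝ)) (hQ : Generic Q) (hQne : Q.Nonempty) (x0 y0 : ℝ) :
    ∃ Q' : Finset (ℝ × ℝ), Q'.card = Q.card ∧ Generic Q' ∧
      (∀ p ∈ Q', x0 < p.1 ∧ p.1 < x0 + 1 ∧ y0 < p.2 ∧ p.2 < y0 + 1) ∧
      (∀ p ∈ Q', ∀ q ∈ Q', p ≠ q → |ptSlope p q| < 1) ∧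
      (∀ k, HasCup Q' k → HasCup Q k) ∧ (∀ k, HasCap Q' k → HasCap Q k) ∧
      (∀ S : Finset (ℝ × ℝ), S ⊆ Q' → ConvexPos ↑S →
        ∃ T : Finset (ℝ × ℝ), T ⊆ Q ∧ T.card = S.card ∧ ConvexPos ↑T) := by
  classical
  -- coordinate bound
  obtain ⟨Xb, hXb⟩ : ∃ Xb : ℝ, ∀ p ∈ Q, max |p.1| |p.2| ≤ Xb :=
    ⟨(Q.image (fun p => max |p.1| |p.2|)).max' (hQne.image _),
      fun p hp => Finset.le_max' _ _ (Finset.mem_image_of_mem (fun p => max |p.1| |p.2|) hp)⟩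
  set X : ℝ := Xb + 1 with hXdef
  have hX : ∀ p ∈ Q, |p.1| < X ∧ |p.2| < X := by
    intro p hp
    have h1 := hXb p hp
    have h2 := le_max_left |p.1| |p.2|
    have h3 := le_max_right |p.1| |p.2|
    exact ⟨by rw [hXdef]; linarith, by rw [hXdef]; linarith⟩
  have hX0 : 0 < X := by
    obtain ⟨p, hp⟩ := hQne
    have := (hX p hp).1
    have := abs_nonneg p.1
    linarith
  -- slope bound
  obtain ⟨Mb, hMb⟩ : ∃ Mb : ℝ, ∀ p ∈ Q, ∀ q ∈ Q, |ptSlope p q| ≤ Mb := by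
    obtain ⟨p0, hp0⟩ := hQne
    refine ⟨((Q ×ˢ Q).image (fun z => |ptSlope z.1 z.2|)).max'
      (Finset.Nonempty.image ⟨(p0, p0), Finset.mk_mem_product hp0 hp0⟩ _), ?_⟩
    intro p hp q hq
    exact Finset.le_max' _ _ (Finset.mem_image_of_mem (fun z => |ptSlope z.1 z.2|)
      (show (p, q) ∈ Q ×ˢ Q from Finset.mem_product.mpr ⟨hp, hq⟩))
  set M : ℝ := Mb + 1 with hMdef
  have hM : ∀ p ∈ Q, ∀ q ∈ Q, |ptSlope p q| < M := by
    intro p hp q hq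
    have := hMb p hp q hq
    rw [hMdef]; linarith
  have hM1 : 1 ≤ M := by
    obtain ⟨p, hp⟩ := hQne
    have h0 := hMb p hp p hp
    have := abs_nonneg (ptSlope p p)
    rw [hMdef]; linarith
  set α : ℝ := 1 / (2 * X) with hαdef
  have hα : 0 < α := by rw [hαdef]; exact div_pos one_pos (by linarith)
  set δ : ℝ := α / M with hδdef
  have hδ : 0 < δ := by rw [hδdef]; exact div_pos hα (by linarith)
  have hαX : α * X = 1 / 2 := by
    rw [hαdef]; field_simp
  have hδX : δ * X ≤ 1 / 2 := by
    rw [hδdef, div_mul_eq_mul_div, hαX, div_le_div_iff₀ (by linarith) (by norm_num)]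
    linarith
  set φ : ℝ × ℝ → ℝ × ℝ := fun v => tmap α δ (x0 + 1/2) (y0 + 1/2) v with hφdef
  have hφinj : Function.Injective φ := tmap_injective (ne_of_gt hα) (ne_of_gt hδ) _ _
  set Q' := Q.image φ with hQ'
  have hmem' : ∀ p' ∈ Q', ∃ p ∈ Q, φ p = p' := fun p' hp' => Finset.mem_image.mp hp'
  have hslope : ∀ p q : ℝ × ℝ, ptSlope (φ p) (φ q) = (δ / α) * ptSlope p q :=
    fun p q => tmap_slope (ne_of_gt hα) _ _ p q
  have hδα : δ / α = 1 / M := by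
    rw [hδdef, div_right_comm, div_self (ne_of_gt hα)]
  have hδα0 : 0 < δ / α := div_pos hδ hα
  -- x-coordinates
  have hx' : ∀ p : ℝ × ℝ, (φ p).1 = α * p.1 + (x0 + 1/2) := fun p => rfl
  have hy' : ∀ p : ℝ × ℝ, (φ p).2 = δ * p.2 + (y0 + 1/2) := fun p => rfl
  have hxmono : ∀ p q : ℝ × ℝ, p.1 < q.1 ↔ (φ p).1 < (φ q).1 := by
    intro p q
    rw [hx', hx']
    constructor
    · intro h; nlinarith [h, hα]
    · intro h; nlinarith [h, hα]
  have hInj' : Set.InjOn (fun p : ℝ × ℝ => p.1) ↑Q' := by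
    intro a ha b hb hab
    obtain ⟨p, hp, rfl⟩ := hmem' a (by exact_mod_cast ha)
    obtain ⟨q, hq, rfl⟩ := hmem' b (by exact_mod_cast hb)
    simp only [hx'] at hab
    have h2 : α * p.1 = α * q.1 := by linarith [hab]
    have : p.1 = q.1 := mul_left_cancel₀ (ne_of_gt hα) h2
    have := hQ.2 (by exact_mod_cast hp) (by exact_mod_cast hq) this
    rw [this]
  refine ⟨Q', Finset.card_image_of_injective _ hφinj, ⟨?_, hInj'⟩, ?_, ?_, ?_, ?_, ?_⟩
  -- GenPos
  · intro a ha b hb c hc hab hac hbc hcol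
    obtain ⟨p, hp, rfl⟩ := hmem' a ha
    obtain ⟨q, hq, rfl⟩ := hmem' b hb
    obtain ⟨s, hs, rfl⟩ := hmem' c hc
    have hpq : p ≠ q := fun h => hab (congrArg φ h)
    have hps : p ≠ s := fun h => hac (congrArg φ h)
    have hqs : q ≠ s := fun h => hbc (congrArg φ h)
    have hx1 : (φ p).1 ≠ (φ q).1 := fun h => hab (hInj' (by exact_mod_cast Finset.mem_image_of_mem φ hp) (by exact_mod_cast Finset.mem_image_of_mem φ hq) h)
    have hdet := (collinear_triple hx1).mp hcol
    simp only [hx', hy'] at hdet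
    have hdet2 : (s.2 - p.2) * (q.1 - p.1) - (q.2 - p.2) * (s.1 - p.1) = 0 := by
      have hαδ : α * δ ≠ 0 := ne_of_gt (mul_pos hα hδ)
      have h3 : α * δ * ((s.2 - p.2) * (q.1 - p.1) - (q.2 - p.2) * (s.1 - p.1)) = 0 := by
        linear_combination hdet
      exact (mul_eq_zero.mp h3).resolve_left hαδ
    have hpq1 : p.1 ≠ q.1 := fun h => hpq (hQ.2 (by exact_mod_cast hp) (by exact_mod_cast hq) h)
    have hcol2 : Collinear ℝ ({p, q, s} : Set (ℝ × ℝ)) := by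
      rw [collinear_triple hpq1]
      linarith [hdet2]
    exact hQ.1 p hp q hq s hs hpq hps hqs hcol2
  -- box
  · intro p' hp'
    obtain ⟨p, hp, rfl⟩ := hmem' p' hp'
    have h1 := (hX p hp).1
    have h2 := (hX p hp).2
    rw [abs_lt] at h1 h2
    have hb1 : |α * p.1| < 1/2 := by
      rw [abs_lt]
      constructor <;> nlinarith [hαX]
    have hb2 : |δ * p.2| < 1/2 := by
      rw [abs_lt]
      constructor <;> nlinarith [hδX, hδ]
    rw [abs_lt] at hb1 hb2
    rw [hx', hy']
    exact ⟨by linarith [hb1.1], by linarith [hb1.2], by linarith [hb2.1], by linarith [hb2.2]⟩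
  -- slopes
  · intro p' hp' q' hq' hne
    obtain ⟨p, hp, rfl⟩ := hmem' p' hp'
    obtain ⟨q, hq, rfl⟩ := hmem' q' hq'
    rw [hslope, hδα, abs_mul, abs_div]
    have := hM p hp q hq
    have h1 : |(1:ℝ)| / |M| = 1 / M := by
      rw [abs_one, abs_of_pos (by linarith : (0:ℝ) < M)]
    rw [h1]
    rw [div_mul_eq_mul_div, one_mul, div_lt_one (by linarith : (0:ℝ) < M)]
    exact this
  -- cups
  · intro k hk
    obtain ⟨f', hf'1, hf'2⟩ := hk
    have hex : ∀ i, ∃ p, p ∈ Q ∧ φ p = f' i := fun i => hmem' _ (hf'1 i)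
    choose g hg hgφ using hex
    refine ⟨g, hg, ?_, ?_⟩
    · intro i j hij
      apply (hxmono _ _).mpr
      rw [hgφ i, hgφ j]
      exact hf'2.1 hij
    · intro i j kk hij hjk
      have h := hf'2.2 i j kk hij hjk
      have h2 : ptSlope (φ (g i)) (φ (g j)) < ptSlope (φ (g j)) (φ (g kk)) := by
        rw [hgφ i, hgφ j, hgφ kk]; exact h
      rw [hslope, hslope] at h2
      exact lt_of_mul_lt_mul_left (by linarith [h2]) (le_of_lt hδα0)
  -- caps
  · intro k hk
    obtain ⟨f', hf'1, hf'2⟩ := hk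
    have hex : ∀ i, ∃ p, p ∈ Q ∧ φ p = f' i := fun i => hmem' _ (hf'1 i)
    choose g hg hgφ using hex
    refine ⟨g, hg, ?_, ?_⟩
    · intro i j hij
      apply (hxmono _ _).mpr
      rw [hgφ i, hgφ j]
      exact hf'2.1 hij
    · intro i j kk hij hjk
      have h := hf'2.2 i j kk hij hjk
      have h2 : ptSlope (φ (g j)) (φ (g kk)) < ptSlope (φ (g i)) (φ (g j)) := by
        rw [hgφ i, hgφ j, hgφ kk]; exact h
      rw [hslope, hslope] at h2
      exact lt_of_mul_lt_mul_left (by linarith [h2]) (le_of_lt hδα0)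
  -- convex position transfer
  · intro S hS hSconv
    set T := Q.filter (fun p => φ p ∈ S) with hT
    have hTQ : T ⊆ Q := Finset.filter_subset _ _
    have hTim : T.image φ = S := by
      apply Finset.Subset.antisymm
      · intro s hs
        obtain ⟨p, hp, rfl⟩ := Finset.mem_image.mp hs
        exact (Finset.mem_filter.mp hp).2
      · intro s hs
        obtain ⟨p, hp, rfl⟩ := hmem' s (hS hs)
        exact Finset.mem_image_of_mem _ (Finset.mem_filter.mpr ⟨hp, hs⟩)
    have hTcard : T.card = S.card := by
      rw [← hTim, Finset.card_image_of_injective _ hφinj]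
    refine ⟨T, hTQ, hTcard, ?_⟩
    intro p hp hmem
    have hφp : φ p ∈ (↑S : Set (ℝ × ℝ)) := by
      have : p ∈ T := by exact_mod_cast hp
      exact_mod_cast (Finset.mem_filter.mp this).2
    apply hSconv (φ p) hφp
    have himg : φ p ∈ φ '' (convexHull ℝ ((↑T : Set (ℝ × ℝ)) \ {p})) := Set.mem_image_of_mem _ hmem
    rw [show φ '' (convexHull ℝ ((↑T : Set (ℝ × ℝ)) \ {p}))
        = convexHull ℝ (φ '' ((↑T : Set (ℝ × ℝ)) \ {p})) from
      (tmap α δ (x0 + 1/2) (y0 + 1/2)).image_convexHull _] at himg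
    rw [Set.image_diff hφinj, Set.image_singleton] at himg
    have hTS : φ '' (↑T : Set (ℝ × ℝ)) = ↑S := by
      rw [← hTim, Finset.coe_image]
    rwa [hTS] at himg

end ESAux
namespace ESAux

lemma collinear_slope_eq2 {p q r : ℝ × ℝ} (h1 : p.1 < q.1) (h2 : q.1 < r.1)
    (hc : Collinear ℝ ({p, q, r} : Set (ℝ × ℝ))) : ptSlope p q = ptSlope q r := by
  have hdet := (collinear_triple (ne_of_lt h1)).mp hc
  rw [ptSlope, ptSlope, div_eq_div_iff (by linarith) (by linarith)]
  nlinarith [hdet]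

lemma merge (A B : Finset (ℝ × ℝ)) (hA : Generic A) (hB : Generic B)
    (hAne : A.Nonempty) (hBne : B.Nonempty) :
    ∃ C : Finset (ℝ × ℝ), C.card = A.card + B.card ∧ Generic C ∧
      (∀ a, ¬HasCup A a → ¬HasCup B (a+1) → ¬HasCup C (a+1)) ∧
      (∀ b, ¬HasCap B b → ¬HasCap A (b+1) → ¬HasCap C (b+1)) ∧
      (∀ m a b, ¬HasCup A a → ¬HasCap B b → a + b ≤ m + 2 →
        (∀ S : Finset (ℝ × ℝ), S ⊆ A → ConvexPos ↑S → S.card ≤ m) →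
        (∀ S : Finset (ℝ × ℝ), S ⊆ B → ConvexPos ↑S → S.card ≤ m) →
        (∀ S : Finset (ℝ × ℝ), S ⊆ C → ConvexPos ↑S → S.card ≤ m)) := by
  classical
  obtain ⟨A', hA'card, hA'gen, hA'box, hA'slope, hA'cup, hA'cap, hA'conv⟩ :=
    normalize A hA hAne 0 0
  obtain ⟨B', hB'card, hB'gen, hB'box, hB'slope, hB'cup, hB'cap, hB'conv⟩ :=
    normalize B hB hBne 2 8
  set C := A' ∪ B' with hC
  have hdisj : ∀ p, p ∈ A' → p ∈ B' → False := by
    intro p h1 h2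
    have := (hA'box p h1).2.1
    have := (hB'box p h2).1
    linarith
  have hxAB : ∀ p ∈ A', ∀ q ∈ B', p.1 < q.1 := by
    intro p hp q hq
    have := (hA'box p hp).2.1
    have := (hB'box q hq).1
    linarith
  have hsAB : ∀ p ∈ A', ∀ q ∈ B', 2 < ptSlope p q := by
    intro p hp q hq
    obtain ⟨hx1, hx2, hy1, hy2⟩ := hA'box p hp
    obtain ⟨hx1', hx2', hy1', hy2'⟩ := hB'box q hq
    rw [ptSlope, lt_div_iff₀ (by linarith)]
    linarith
  have hmemC : ∀ p ∈ C, p ∈ A' ∨ p ∈ B' := fun p hp => Finset.mem_union.mp hp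
  have hCinj : Set.InjOn (fun p : ℝ × ℝ => p.1) ↑C := by
    intro u hu v hv huv
    have hu' : u ∈ C := by exact_mod_cast hu
    have hv' : v ∈ C := by exact_mod_cast hv
    rcases hmemC u hu' with h1 | h1 <;> rcases hmemC v hv' with h2 | h2
    · exact hA'gen.2 (by exact_mod_cast h1) (by exact_mod_cast h2) huv
    · exact absurd huv (ne_of_lt (hxAB u h1 v h2))
    · exact absurd huv (ne_of_gt (hxAB v h2 u h1))
    · exact hB'gen.2 (by exact_mod_cast h1) (by exact_mod_cast h2) huv
  have hnc : ∀ u v w : ℝ × ℝ, u ∈ C → v ∈ C → w ∈ C → u.1 < v.1 → v.1 < w.1 →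
      ¬ Collinear ℝ ({u, v, w} : Set (ℝ × ℝ)) := by
    intro u v w hu hv hw huv hvw hcol
    have hslopes := collinear_slope_eq2 huv hvw hcol
    have hune : u ≠ v := fun h => absurd (congrArg Prod.fst h) (ne_of_lt huv)
    have hvne : v ≠ w := fun h => absurd (congrArg Prod.fst h) (ne_of_lt hvw)
    have huwne : u ≠ w := fun h => absurd (congrArg Prod.fst h) (ne_of_lt (huv.trans hvw))
    rcases hmemC u hu with hu' | hu'
    · rcases hmemC w hw with hw' | hw'
      · have hv' : v ∈ A' := by
          rcases hmemC v hv with h | h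
          · exact h
          · exact absurd hvw (not_lt.mpr (le_of_lt (hxAB w hw' v h)))
        exact hA'gen.1 u hu' v hv' w hw' hune huwne hvne hcol
      · rcases hmemC v hv with hv' | hv'
        · have h1 := hA'slope u hu' v hv' hune
          have h2 := hsAB v hv' w hw'
          rw [hslopes] at h1
          have := abs_lt.mp h1
          linarith
        · have h1 := hsAB u hu' v hv'
          have h2 := hB'slope v hv' w hw' hvne
          rw [← hslopes] at h2
          have := abs_lt.mp h2
          linarith
    · have hv' : v ∈ B' := by
        rcases hmemC v hv with h | h
        · exact absurd huv (not_lt.mpr (le_of_lt (hxAB v h u hu')))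
        · exact h
      have hw' : w ∈ B' := by
        rcases hmemC w hw with h | h
        · exact absurd (huv.trans hvw) (not_lt.mpr (le_of_lt (hxAB w h u hu')))
        · exact h
      exact hB'gen.1 u hu' v hv' w hw' hune huwne hvne hcol
  have hCgen : Generic C := by
    refine ⟨?_, hCinj⟩
    intro p hp q hq r hr hpq hpr hqr hcol
    have hpq1 : p.1 ≠ q.1 := fun h =>
      hpq (hCinj (by exact_mod_cast hp) (by exact_mod_cast hq) h)
    have hpr1 : p.1 ≠ r.1 := fun h =>
      hpr (hCinj (by exact_mod_cast hp) (by exact_mod_cast hr) h)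
    have hqr1 : q.1 ≠ r.1 := fun h =>
      hqr (hCinj (by exact_mod_cast hq) (by exact_mod_cast hr) h)
    rcases hpq1.lt_or_gt with h1 | h1
    · rcases hqr1.lt_or_gt with h2 | h2
      · exact hnc p q r hp hq hr h1 h2 (hcol.subset (by intro z hz; simp at hz ⊢; tauto))
      · rcases hpr1.lt_or_gt with h3 | h3
        · exact hnc p r q hp hr hq h3 h2 (hcol.subset (by intro z hz; simp at hz ⊢; tauto))
        · exact hnc r p q hr hp hq h3 h1 (hcol.subset (by intro z hz; simp at hz ⊢; tauto))
    · rcases hpr1.lt_or_gt with h2 | h2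
      · exact hnc q p r hq hp hr h1 h2 (hcol.subset (by intro z hz; simp at hz ⊢; tauto))
      · rcases hqr1.lt_or_gt with h3 | h3
        · exact hnc q r p hq hr hp h3 h2 (hcol.subset (by intro z hz; simp at hz ⊢; tauto))
        · exact hnc r q p hr hq hp h3 h1 (hcol.subset (by intro z hz; simp at hz ⊢; tauto))
  -- structure of cups and caps crossing the two parts
  have cupStruct : ∀ (k : ℕ) (f : Fin (k + 1) → ℝ × ℝ), (∀ i, f i ∈ C) → IsCupSeq f →
      f 0 ∈ A' → f (Fin.last k) ∈ B' → ∀ i : Fin (k + 1), i ≠ Fin.last k → f i ∈ A' := by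
    intro k f hfC hf h0 hlast
    set T := Finset.univ.filter (fun i : Fin (k+1) => f i ∈ B') with hT
    have hTne : T.Nonempty := ⟨Fin.last k, Finset.mem_filter.mpr ⟨Finset.mem_univ _, hlast⟩⟩
    set t := T.min' hTne with ht
    have htB : f t ∈ B' := (Finset.mem_filter.mp (T.min'_mem hTne)).2
    have ht0 : 0 < t.val := by
      rcases Nat.eq_zero_or_pos t.val with h | h
      swap
      · exact h
      · exfalso
        have : t = 0 := Fin.ext h
        rw [this] at htB
        exact hdisj _ h0 htB
    have hmin : ∀ j : Fin (k+1), j < t → f j ∈ A' := by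
      intro j hj
      have hjT : j ∉ T := fun hjT => absurd (T.min'_le j hjT) (not_le.mpr hj)
      rcases hmemC _ (hfC j) with h | h
      · exact h
      · exact absurd (Finset.mem_filter.mpr ⟨Finset.mem_univ j, h⟩) hjT
    have hteq : t = Fin.last k := by
      by_contra hne
      have htlt : t.val < k := by
        have h1 : t.val ≤ k := Nat.lt_succ_iff.mp t.isLt
        have h2 : t.val ≠ k := fun h => hne (Fin.ext (by simpa using h))
        omega
      set i1 : Fin (k+1) := ⟨t.val - 1, by omega⟩ with hi1def
      set i3 : Fin (k+1) := ⟨t.val + 1, by omega⟩ with hi3def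
      have hi1 : i1 < t := by rw [Fin.lt_def]; show t.val - 1 < t.val; omega
      have hi3 : t < i3 := by rw [Fin.lt_def]; show t.val < t.val + 1; omega
      have hfi1 : f i1 ∈ A' := hmin i1 hi1
      have hfi3 : f i3 ∈ B' := by
        rcases hmemC _ (hfC i3) with h | h
        · exfalso
          have hx := hf.1 hi3
          have := hxAB (f i3) h (f t) htB
          simp only at hx
          linarith
        · exact h
      have hs1 := hsAB (f i1) hfi1 (f t) htB
      have hne13 : f t ≠ f i3 := fun h => absurd (congrArg Prod.fst h) (ne_of_lt (hf.1 hi3))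
      have hs2 := hB'slope (f t) htB (f i3) hfi3 hne13
      have hcup := hf.2 i1 t i3 hi1 hi3
      have := abs_lt.mp hs2
      linarith
    intro i hi
    apply hmin
    rw [hteq]
    have h1 : i.val ≤ k := Nat.lt_succ_iff.mp i.isLt
    have h2 : i.val ≠ k := fun h => hi (Fin.ext (by simpa using h))
    rw [Fin.lt_def]
    show i.val < k
    omega
  have capStruct : ∀ (k : ℕ) (g : Fin (k + 1) → ℝ × ℝ), (∀ i, g i ∈ C) → IsCapSeq g →
      g 0 ∈ A' → g (Fin.last k) ∈ B' → ∀ i : Fin (k + 1), i ≠ 0 → g i ∈ B' := by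
    intro k g hgC hg h0 hlast
    set T := Finset.univ.filter (fun i : Fin (k+1) => g i ∈ A') with hT
    have hTne : T.Nonempty := ⟨0, Finset.mem_filter.mpr ⟨Finset.mem_univ _, h0⟩⟩
    set t := T.max' hTne with ht
    have htA : g t ∈ A' := (Finset.mem_filter.mp (T.max'_mem hTne)).2
    have htlt : t.val < k := by
      have h1 : t.val ≤ k := Nat.lt_succ_iff.mp t.isLt
      have h2 : t.val ≠ k := by
        intro h
        have : t = Fin.last k := Fin.ext (by simpa using h)
        rw [this] at htA
        exact hdisj _ htA hlast
      omega
    have hmax : ∀ j : Fin (k+1), t < j → g j ∈ B' := by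
      intro j hj
      have hjT : j ∉ T := fun hjT => absurd (T.le_max' j hjT) (not_le.mpr hj)
      rcases hmemC _ (hgC j) with h | h
      · exact absurd (Finset.mem_filter.mpr ⟨Finset.mem_univ j, h⟩) hjT
      · exact h
    have hteq : t.val = 0 := by
      by_contra hne
      set i1 : Fin (k+1) := ⟨t.val - 1, by omega⟩ with hi1def
      set i3 : Fin (k+1) := ⟨t.val + 1, by omega⟩ with hi3def
      have hi1 : i1 < t := by rw [Fin.lt_def]; show t.val - 1 < t.val; omega
      have hi3 : t < i3 := by rw [Fin.lt_def]; show t.val < t.val + 1; omega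
      have hgi3 : g i3 ∈ B' := hmax i3 hi3
      have hgi1 : g i1 ∈ A' := by
        rcases hmemC _ (hgC i1) with h | h
        · exact h
        · exfalso
          have hx := hg.1 hi1
          have := hxAB (g t) htA (g i1) h
          simp only at hx
          linarith
      have hne11 : g i1 ≠ g t := fun h => absurd (congrArg Prod.fst h) (ne_of_lt (hg.1 hi1))
      have hs1 := hA'slope (g i1) hgi1 (g t) htA hne11
      have hs2 := hsAB (g t) htA (g i3) hgi3
      have hcap := hg.2 i1 t i3 hi1 hi3
      have := abs_lt.mp hs1
      linarith
    intro i hi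
    apply hmax
    rw [Fin.lt_def, hteq]
    have : i.val ≠ 0 := fun h => hi (Fin.ext (by simpa using h))
    omega
  have prefixCup : ∀ (k : ℕ) (f : Fin (k+1) → ℝ × ℝ), IsCupSeq f →
      (∀ i : Fin (k+1), i ≠ Fin.last k → f i ∈ A') → HasCup A' k := by
    intro k f hf hmem
    set e : Fin k → Fin (k+1) := fun i => ⟨i.val, Nat.lt_succ_of_lt i.isLt⟩ with he
    have hemono : StrictMono e := by
      intro i j hij
      rw [Fin.lt_def] at hij ⊢
      exact hij
    refine ⟨f ∘ e, ?_, cupSeq_comp hf e hemono⟩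
    intro i
    apply hmem
    intro hE
    have h2 : i.val = k := by simpa using congrArg Fin.val hE
    have := i.isLt
    omega
  have suffixCap : ∀ (k : ℕ) (g : Fin (k+1) → ℝ × ℝ), IsCapSeq g →
      (∀ i : Fin (k+1), i ≠ 0 → g i ∈ B') → HasCap B' k := by
    intro k g hg hmem
    set e : Fin k → Fin (k+1) := fun i => ⟨i.val + 1, Nat.succ_lt_succ i.isLt⟩ with he
    have hemono : StrictMono e := by
      intro i j hij
      rw [Fin.lt_def] at hij ⊢
      exact Nat.succ_lt_succ hij
    refine ⟨g ∘ e, ?_, capSeq_comp hg e hemono⟩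
    intro i
    apply hmem
    intro hE
    have h2 : i.val + 1 = 0 := by
      have := congrArg Fin.val hE; rw [Fin.val_zero] at this; exact this
    omega
  have cupClause : ∀ a, ¬HasCup A a → ¬HasCup B (a+1) → ¬HasCup C (a+1) := by
    rintro a hcA hcB ⟨f, hfC, hf⟩
    by_cases h0 : f 0 ∈ B'
    · apply hcB
      apply hB'cup
      refine ⟨f, ?_, hf⟩
      intro i
      rcases hmemC _ (hfC i) with h | h
      · exfalso
        rcases eq_or_ne i 0 with rfl | hne
        · exact hdisj _ h h0
        · have hlt : (0 : Fin (a+1)) < i := by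
            rw [Fin.lt_def]
            show 0 < i.val
            have : i.val ≠ 0 := fun hh => hne (Fin.ext (by simpa using hh))
            omega
          have hx := hf.1 hlt
          have := hxAB (f i) h (f 0) h0
          simp only at hx
          linarith
      · exact h
    · have h0A : f 0 ∈ A' := (hmemC _ (hfC 0)).resolve_right h0
      by_cases hall : ∀ i, f i ∈ A'
      · exact hcA (hasCup_mono (Nat.le_succ a) (hA'cup _ ⟨f, hall, hf⟩))
      · push_neg at hall
        obtain ⟨i0, hi0⟩ := hall
        have hi0B : f i0 ∈ B' := (hmemC _ (hfC i0)).resolve_left hi0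
        have hlastB : f (Fin.last a) ∈ B' := by
          rcases hmemC _ (hfC (Fin.last a)) with h | h
          · exfalso
            have hx : (f i0).1 ≤ (f (Fin.last a)).1 := by
              rcases eq_or_lt_of_le (Fin.le_last i0) with heq | hlt
              · rw [heq]
              · exact le_of_lt (hf.1 hlt)
            have := hxAB _ h _ hi0B
            linarith
          · exact h
        have hpre := cupStruct a f hfC hf h0A hlastB
        exact hcA (hA'cup a (prefixCup a f hf hpre))
  have capClause : ∀ b, ¬HasCap B b → ¬HasCap A (b+1) → ¬HasCap C (b+1) := by
    rintro b hcB hcA ⟨g, hgC, hg⟩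
    by_cases hl : g (Fin.last b) ∈ A'
    · apply hcA
      apply hA'cap
      refine ⟨g, ?_, hg⟩
      intro i
      rcases hmemC _ (hgC i) with h | h
      · exact h
      · exfalso
        have hx : (g i).1 ≤ (g (Fin.last b)).1 := by
          rcases eq_or_lt_of_le (Fin.le_last i) with heq | hlt
          · rw [heq]
          · exact le_of_lt (hg.1 hlt)
        have := hxAB _ hl _ h
        linarith
    · have hlB : g (Fin.last b) ∈ B' := (hmemC _ (hgC _)).resolve_left hl
      by_cases hall : ∀ i, g i ∈ B'
      · exact hcB (hasCap_mono (Nat.le_succ b) (hB'cap _ ⟨g, hall, hg⟩))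
      · push_neg at hall
        obtain ⟨i0, hi0⟩ := hall
        have hi0A : g i0 ∈ A' := (hmemC _ (hgC i0)).resolve_right hi0
        have h0A : g 0 ∈ A' := by
          rcases hmemC _ (hgC 0) with h | h
          · exact h
          · exfalso
            have hx : (g 0).1 ≤ (g i0).1 := by
              rcases eq_or_ne i0 0 with rfl | hne
              · exact le_refl _
              · have hlt : (0 : Fin (b+1)) < i0 := by
                  rw [Fin.lt_def]
                  show 0 < i0.val
                  have : i0.val ≠ 0 := fun hh => hne (Fin.ext (by simpa using hh))
                  omega
                exact le_of_lt (hg.1 hlt)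
            have := hxAB _ hi0A _ h
            linarith
        have hsuf := capStruct b g hgC hg h0A hlB
        exact hcB (hB'cap b (suffixCap b g hg hsuf))
  have convClause : ∀ m a b, ¬HasCup A a → ¬HasCap B b → a + b ≤ m + 2 →
      (∀ S : Finset (ℝ × ℝ), S ⊆ A → ConvexPos ↑S → S.card ≤ m) →
      (∀ S : Finset (ℝ × ℝ), S ⊆ B → ConvexPos ↑S → S.card ≤ m) →
      (∀ S : Finset (ℝ × ℝ), S ⊆ C → ConvexPos ↑S → S.card ≤ m) := by
    intro m a b hcA hcB hab hconvA hconvB S hS hSconv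
    by_cases hSA : ∀ p ∈ S, p ∈ A'
    · obtain ⟨T, hT1, hT2, hT3⟩ := hA'conv S (fun p hp => hSA p hp) hSconv
      rw [← hT2]
      exact hconvA T hT1 hT3
    · by_cases hSB : ∀ p ∈ S, p ∈ B'
      · obtain ⟨T, hT1, hT2, hT3⟩ := hB'conv S (fun p hp => hSB p hp) hSconv
        rw [← hT2]
        exact hconvB T hT1 hT3
      · push_neg at hSA hSB
        obtain ⟨pB, hpBS, hpBnA⟩ := hSA
        obtain ⟨pA, hpAS, hpAnB⟩ := hSB
        have hpB : pB ∈ B' := (hmemC _ (hS hpBS)).resolve_left hpBnA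
        have hpA : pA ∈ A' := (hmemC _ (hS hpAS)).resolve_right hpAnB
        have hcard2 : 2 ≤ S.card := Finset.one_lt_card.mpr
          ⟨pA, hpAS, pB, hpBS, fun h => hdisj pA hpA (by rw [h]; exact hpB)⟩
        have hSgen : Generic S := generic_subset hS hCgen
        obtain ⟨a', b', f, g, hsum, hfS, hgS, hfcup, hgcap, hfend, hgend⟩ :=
          decomposition S hcard2 hSgen.2 hSgen.1 hSconv
        have hf0A : f 0 ∈ A' := by
          rcases hmemC _ (hS (hfS 0)) with h | h
          · exact h
          · exfalso
            have h1 := (hfend pA hpAS).1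
            have h2 := hxAB pA hpA (f 0) h
            linarith
        have hflB : f (Fin.last (a'+1)) ∈ B' := by
          rcases hmemC _ (hS (hfS (Fin.last (a'+1)))) with h | h
          · exfalso
            have h1 := (hfend pB hpBS).2
            have h2 := hxAB (f (Fin.last (a'+1))) h pB hpB
            linarith
          · exact h
        have hg0A : g 0 ∈ A' := by
          rcases hmemC _ (hS (hgS 0)) with h | h
          · exact h
          · exfalso
            have h1 := (hgend pA hpAS).1
            have h2 := hxAB pA hpA (g 0) h
            linarith
        have hglB : g (Fin.last (b'+1)) ∈ B' := by
          rcases hmemC _ (hS (hgS (Fin.last (b'+1)))) with h | h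
          · exfalso
            have h1 := (hgend pB hpBS).2
            have h2 := hxAB (g (Fin.last (b'+1))) h pB hpB
            linarith
          · exact h
        have hpre := cupStruct (a'+1) f (fun i => hS (hfS i)) hfcup hf0A hflB
        have hcupA : HasCup A (a'+1) := hA'cup _ (prefixCup (a'+1) f hfcup hpre)
        have h1 : a' + 2 ≤ a := by
          by_contra hle
          push_neg at hle
          exact hcA (hasCup_mono (by omega) hcupA)
        have hsuf := capStruct (b'+1) g (fun i => hS (hgS i)) hgcap hg0A hglB
        have hcapB : HasCap B (b'+1) := hB'cap _ (suffixCap (b'+1) g hgcap hsuf)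
        have h2 : b' + 2 ≤ b := by
          by_contra hle
          push_neg at hle
          exact hcB (hasCap_mono (by omega) hcapB)
        omega
  have hdisjF : Disjoint A' B' := Finset.disjoint_left.mpr (fun p hp hp2 => hdisj p hp hp2)
  refine ⟨C, ?_, hCgen, cupClause, capClause, convClause⟩
  rw [hC, Finset.card_union_of_disjoint hdisjF, hA'card, hB'card]

end ESAux
namespace ESAux

lemma conv_of_cupcap {Q : Finset (ℝ × ℝ)} (hQ : Generic Q) {k l : ℕ}
    (hk : ¬HasCup Q k) (hl : ¬HasCap Q l) :
    ∀ S : Finset (ℝ × ℝ), S ⊆ Q → ConvexPos ↑S → S.card ≤ 1 ∨ S.card + 4 ≤ k + l := by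
  intro S hS hconv
  rcases le_or_gt S.card 1 with h | h
  · exact Or.inl h
  · right
    have hSgen := generic_subset hS hQ
    obtain ⟨a', b', f, g, hsum, hfS, hgS, hfcup, hgcap, _, _⟩ :=
      decomposition S (by omega) hSgen.2 hSgen.1 hconv
    have h1 : ¬ (k ≤ a' + 2) := fun hh =>
      hk (hasCup_mono hh (hasCup_subset hS ⟨f, hfS, hfcup⟩))
    have h2 : ¬ (l ≤ b' + 2) := fun hh =>
      hl (hasCap_mono hh (hasCap_subset hS ⟨g, hgS, hgcap⟩))
    omega

lemma deltaExists : ∀ s k l : ℕ, k + l = s → 2 ≤ k → 2 ≤ l →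
    ∃ Q : Finset (ℝ × ℝ), Q.card = Nat.choose (k + l - 4) (k - 2) ∧ Generic Q ∧
      ¬HasCup Q k ∧ ¬HasCap Q l := by
  intro s
  induction s using Nat.strong_induction_on with
  | _ s ih =>
    intro k l hs hk hl
    rcases eq_or_lt_of_le hk with hk2 | hk3
    · refine ⟨{((0:ℝ),(0:ℝ))}, ?_, generic_singleton _, ?_, ?_⟩
      · rw [← hk2]
        simp
      · rw [← hk2]
        exact not_hasCup_two (by simp)
      · intro hcap
        exact not_hasCap_two (P := {((0:ℝ),(0:ℝ))}) (by simp) (hasCap_mono hl hcap)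
    · rcases eq_or_lt_of_le hl with hl2 | hl3
      · refine ⟨{((0:ℝ),(0:ℝ))}, ?_, generic_singleton _, ?_, ?_⟩
        · rw [← hl2]
          have e : k + 2 - 4 = k - 2 := by omega
          rw [e, Nat.choose_self]
          simp
        · intro hcup
          exact not_hasCup_two (P := {((0:ℝ),(0:ℝ))}) (by simp) (hasCup_mono hk hcup)
        · rw [← hl2]
          exact not_hasCap_two (by simp)
      · obtain ⟨A, hAcard, hAgen, hAcup, hAcap⟩ :=
          ih (s-1) (by omega) (k-1) l (by omega) (by omega) hl
        obtain ⟨B, hBcard, hBgen, hBcup, hBcap⟩ :=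
          ih (s-1) (by omega) k (l-1) (by omega) hk (by omega)
        have hAne : A.Nonempty := by
          rw [← Finset.card_pos, hAcard]
          exact Nat.choose_pos (by omega)
        have hBne : B.Nonempty := by
          rw [← Finset.card_pos, hBcard]
          exact Nat.choose_pos (by omega)
        obtain ⟨Cn, hCcard, hCgen, hCcup, hCcap, _⟩ := merge A B hAgen hBgen hAne hBne
        refine ⟨Cn, ?_, hCgen, ?_, ?_⟩
        · rw [hCcard, hAcard, hBcard]
          have e : k + l - 4 = (k + l - 5) + 1 := by omega
          have e2 : k - 2 = (k - 3) + 1 := by omega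
          rw [e, e2, Nat.choose_succ_succ]
          congr 1
          · congr 1 <;> omega
          · congr 1
            omega
        · have hk1 : k - 1 + 1 = k := by omega
          rw [← hk1]
          refine hCcup (k-1) hAcup ?_
          rw [hk1]
          exact hBcup
        · have hl1 : l - 1 + 1 = l := by omega
          rw [← hl1]
          refine hCcap (l-1) hBcap ?_
          rw [hl1]
          exact hAcap

lemma towerExists (n : ℕ) (hn : 2 ≤ n) : ∀ c j : ℕ, 1 ≤ j → j + c + 1 = n →
    ∃ Y : Finset (ℝ × ℝ), Y.card = ∑ i ∈ Finset.Ico j n, Nat.choose (n-2) (i-1) ∧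
      Generic Y ∧ ¬HasCup Y n ∧ ¬HasCap Y (n - j + 1) ∧
      (∀ S : Finset (ℝ × ℝ), S ⊆ Y → ConvexPos ↑S → S.card ≤ n - 1) := by
  have getX : ∀ j : ℕ, 1 ≤ j → j + 1 ≤ n →
      ∃ X : Finset (ℝ × ℝ), X.card = Nat.choose (n-2) (j-1) ∧ Generic X ∧
        ¬HasCup X (j+1) ∧ ¬HasCap X (n+1-j) ∧
        (∀ S : Finset (ℝ × ℝ), S ⊆ X → ConvexPos ↑S → S.card ≤ n - 1) := by
    intro j hj1 hjn
    obtain ⟨Q, hQcard, hQgen, hQcup, hQcap⟩ :=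
      deltaExists (n+2) (j+1) (n+1-j) (by omega) (by omega) (by omega)
    have e1 : (j+1) + (n+1-j) - 4 = n - 2 := by omega
    have e2 : (j+1) - 2 = j - 1 := by omega
    rw [e1, e2] at hQcard
    refine ⟨Q, hQcard, hQgen, hQcup, hQcap, ?_⟩
    intro S hS hconv
    rcases conv_of_cupcap hQgen hQcup hQcap S hS hconv with h | h
    · omega
    · omega
  intro c
  induction c with
  | zero =>
    intro j hj hjc
    obtain ⟨X, hXcard, hXgen, hXcup, hXcap, hXconv⟩ := getX j hj (by omega)
    refine ⟨X, ?_, hXgen, ?_, ?_, hXconv⟩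
    · rw [hXcard]
      have e : Finset.Ico j n = {j} := by
        rw [show n = j + 1 by omega]
        exact Nat.Ico_succ_singleton j
      rw [e, Finset.sum_singleton]
    · rw [show n = j + 1 by omega]
      exact hXcup
    · have e : n - j + 1 = n + 1 - j := by omega
      rw [e]
      exact hXcap
  | succ c ihc =>
    intro j hj hjc
    obtain ⟨X, hXcard, hXgen, hXcup, hXcap, hXconv⟩ := getX j hj (by omega)
    obtain ⟨Y', hY'card, hY'gen, hY'cup, hY'cap, hY'conv⟩ := ihc (j+1) (by omega) (by omega)
    have hXne : X.Nonempty := by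
      rw [← Finset.card_pos, hXcard]
      exact Nat.choose_pos (by omega)
    have hY'ne : Y'.Nonempty := by
      rw [← Finset.card_pos, hY'card]
      apply Finset.sum_pos'
      · intro i _
        exact Nat.zero_le _
      · refine ⟨j+1, Finset.mem_Ico.mpr ⟨le_refl _, by omega⟩, ?_⟩
        exact Nat.choose_pos (by omega)
    obtain ⟨Cn, hCcard, hCgen, hCcup, hCcap, hCconv⟩ := merge X Y' hXgen hY'gen hXne hY'ne
    refine ⟨Cn, ?_, hCgen, ?_, ?_, ?_⟩
    · rw [hCcard, hXcard, hY'card]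
      rw [Finset.sum_eq_sum_Ico_succ_bot (show j < n by omega)]
    · have e : n = (n - 1) + 1 := by omega
      rw [e]
      refine hCcup (n-1) (fun h => hXcup (hasCup_mono (by omega) h)) ?_
      rw [← e]
      exact hY'cup
    · have e : n - j + 1 = (n - j) + 1 := by omega
      rw [e]
      refine hCcap (n - j) ?_ ?_
      · have e2 : n - (j+1) + 1 = n - j := by omega
        rw [← e2]
        exact hY'cap
      · have e3 : n - j + 1 = n + 1 - j := by omega
        rw [e3]
        exact hXcap
    · refine hCconv (n-1) (j+1) (n-j) hXcup ?_ (by omega) hXconv hY'conv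
      have e2 : n - (j+1) + 1 = n - j := by omega
      rw [← e2]
      exact hY'cap

end ESAux
theorem erdos_szekeres_construction (n : ℕ) (hn : 2 ≤ n) :
    ∃ P : Finset (ℝ × ℝ), P.card = 2 ^ (n - 2) ∧ GenPos P ∧
      ¬ ∃ S : Finset (ℝ × ℝ), S ⊆ P ∧ S.card = n ∧ ConvexPos ↑S := by
  obtain ⟨Y, hYcard, hYgen, _, _, hYconv⟩ :=
    ESAux.towerExists n hn (n-2) 1 le_rfl (by omega)
  refine ⟨Y, ?_, hYgen.1, ?_⟩
  · rw [hYcard, Finset.sum_Ico_eq_sum_range]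
    simp only [Nat.add_sub_cancel_left]
    rw [show n - 1 = (n-2) + 1 by omega]
    exact Nat.sum_range_choose (n-2)
  · rintro ⟨S, hS1, hS2, hS3⟩
    have := hYconv S hS1 hS3
    omega
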